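/- Let φ : A⁺ → S be a surjective homomorphism, and let Γ_φ be the two-sided Cayley graph of φ. For any u ∈ A⁺, there is no path in Γ_φ from the vertex (φ(u), I) to the vertex (I, φ(u)). Consequently, the path p_u from (I,φ(u)) to (φ(u),I) contains at least one transition edge. -/

import Mathlib

variable {A S : Type*}

/-- Image of a word under the extension of `φ` to the free monoid, in `S¹ = WithOne S`. -/
def phiStar [Semigroup S] (φ : A → S) (w : List A) : WithOne S :=
  (w.map fun a => (φ a : WithOne S)).prod

/-- `φ` induces a surjective homomorphism `A⁺ → S`. -/
def PlusSurj [Semigroup S] (φ : A → S) : Prop :=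
  ∀ s : S, ∃ w : List A, w ≠ [] ∧ phiStar φ w = (s : WithOne S)

/-- An edge `((s₁,t₁), a, (s₂,t₂))` of the two-sided Cayley graph `Γ_φ`. -/
def IsEdge [Semigroup S] (φ : A → S)
    (e : (WithOne S × WithOne S) × A × (WithOne S × WithOne S)) : Prop :=
  e.1.1 * (φ e.2.1 : WithOne S) = e.2.2.1 ∧ e.1.2 = (φ e.2.1 : WithOne S) * e.2.2.2

/-- There is a path labeled `w` from `p` to `q` in `Γ_φ`. -/
def HasPath [Semigroup S] (φ : A → S) (p q : WithOne S × WithOne S) (w : List A) : Prop :=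
  p.1 * phiStar φ w = q.1 ∧ p.2 = phiStar φ w * q.2

/-- There is a (possibly empty) path from `p` to `q` in `Γ_φ`. -/
def Reach [Semigroup S] (φ : A → S) (p q : WithOne S × WithOne S) : Prop :=
  ∃ w : List A, HasPath φ p q w

/-- `p` and `q` lie in the same strongly connected component of `Γ_φ`. -/
def SameSCC [Semigroup S] (φ : A → S) (p q : WithOne S × WithOne S) : Prop :=
  Reach φ p q ∧ Reach φ q p

/-- `p` is a vertex of the canonical path `p_u` of the word `u` in `Γ_φ`. -/
def OnPath [Semigroup S] (φ : A → S) (u : List A) (p : WithOne S × WithOne S) : Prop :=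
  ∃ u₁ u₂ : List A, u = u₁ ++ u₂ ∧ p = (phiStar φ u₁, phiStar φ u₂)

/-- The paths `p_u` and `p_v` meet the same strongly connected components of `Γ_φ`,
i.e. `C(p_u) = C(p_v)`. -/
def SameComponents [Semigroup S] (φ : A → S) (u v : List A) : Prop :=
  (∀ p, OnPath φ u p → ∃ q, OnPath φ v q ∧ SameSCC φ p q) ∧
  (∀ q, OnPath φ v q → ∃ p, OnPath φ u p ∧ SameSCC φ p q)

/-- The two-sided connected congruence `u ≈_φ v`. -/
def ConnCong [Semigroup S] (φ : A → S) (u v : List A) : Prop :=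
  phiStar φ u = phiStar φ v ∧ SameComponents φ u v

/-- `e` is an edge traversed by the canonical path `p_u` in `Γ_φ`. -/
def EdgeOfPath [Semigroup S] (φ : A → S) (u : List A)
    (e : (WithOne S × WithOne S) × A × (WithOne S × WithOne S)) : Prop :=
  ∃ u₁ u₂ : List A, u = u₁ ++ e.2.1 :: u₂ ∧
    e.1 = (phiStar φ u₁, phiStar φ (e.2.1 :: u₂)) ∧
    e.2.2 = (phiStar φ (u₁ ++ [e.2.1]), phiStar φ u₂)

/-- `e` is a transition edge traversed by `p_u`: an edge of `p_u` whose endpoints lie in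
distinct strongly connected components of `Γ_φ`. -/
def IsTransitionOfPath [Semigroup S] (φ : A → S) (u : List A)
    (e : (WithOne S × WithOne S) × A × (WithOne S × WithOne S)) : Prop :=
  EdgeOfPath φ u e ∧ ¬ SameSCC φ e.1 e.2.2

/-- The two-sided Karnofsky–Rhodes congruence `u ≡_φ v`: same image under `φ` and same set
of transition edges. -/
def KRCong [Semigroup S] (φ : A → S) (u v : List A) : Prop :=
  phiStar φ u = phiStar φ v ∧
  ∀ e, IsTransitionOfPath φ u e ↔ IsTransitionOfPath φ v e

/-!
Since `I` is adjoined to `S`, a product in `S¹` equals `I` only when both factors do, so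
`φ(u) ≠ I` for nonempty `u`, and `φ(u) · φ(w) = I` is impossible: no path leaves
`(φ(u), I)` for `(I, φ(u))`. On the other hand, if no edge of `p_u` were a transition edge,
every edge of `p_u` could be reversed by a path, and chaining these reversals from the end
`(φ(u), I)` of `p_u` back to its start `(I, φ(u))` would give exactly such a path.
-/

theorem WithOne.eq_one_of_mul_eq_one_left {M : Type*} [Mul M] {x y : WithOne M}
    (h : x * y = 1) : x = 1 := by
  rcases x with _ | a
  · rfl
  · rcases y with _ | b
    · exact absurd h WithOne.coe_ne_one
    · exact absurd h WithOne.coe_ne_one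

section CayleyGraph

variable [Semigroup S] (φ : A → S)

theorem phiStar_nil : phiStar φ [] = 1 := rfl

theorem phiStar_append (u v : List A) :
    phiStar φ (u ++ v) = phiStar φ u * phiStar φ v := by
  simp [phiStar]

theorem phiStar_eq_one_iff {w : List A} : phiStar φ w = 1 ↔ w = [] := by
  cases w with
  | nil => exact ⟨fun _ => rfl, fun _ => rfl⟩
  | cons a w =>
    simp only [reduceCtorEq, iff_false]
    intro h
    exact WithOne.coe_ne_one (WithOne.eq_one_of_mul_eq_one_left h)

variable {φ}

theorem Reach.refl (p : WithOne S × WithOne S) : Reach φ p p :=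
  ⟨[], by simp [phiStar_nil], by simp [phiStar_nil]⟩

theorem Reach.trans {p q r : WithOne S × WithOne S}
    (hpq : Reach φ p q) (hqr : Reach φ q r) : Reach φ p r := by
  obtain ⟨w, hw₁, hw₂⟩ := hpq
  obtain ⟨w', hw₁', hw₂'⟩ := hqr
  exact ⟨w ++ w', by rw [phiStar_append, ← mul_assoc, hw₁, hw₁'],
    by rw [phiStar_append, mul_assoc, ← hw₂', hw₂]⟩

theorem not_reach_end_start {u : List A} (hu : u ≠ []) :
    ¬ Reach φ (phiStar φ u, 1) (1, phiStar φ u) := by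
  rintro ⟨w, hw, -⟩
  exact hu ((phiStar_eq_one_iff φ).1 (WithOne.eq_one_of_mul_eq_one_left hw))

theorem reach_onPath_of_forall_not_isTransitionOfPath {u : List A}
    (h : ∀ e, ¬ IsTransitionOfPath φ u e) (u₁ u₂ : List A) (hu : u = u₁ ++ u₂) :
    Reach φ (phiStar φ u, 1) (phiStar φ u₁, phiStar φ u₂) := by
  induction u₂ generalizing u₁ with
  | nil => simpa [hu, phiStar_nil] using Reach.refl _
  | cons a t ih =>
    have hedge : EdgeOfPath φ u ((phiStar φ u₁, phiStar φ (a :: t)), a,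
        (phiStar φ (u₁ ++ [a]), phiStar φ t)) := ⟨u₁, t, hu, rfl, rfl⟩
    have hscc := not_not.1 fun hn => h _ ⟨hedge, hn⟩
    exact (ih (u₁ ++ [a]) (by simp [hu])).trans hscc.2

end CayleyGraph

theorem no_return_path_and_transition_edge_exists_general [Semigroup S]
    (φ : A → S) (u : List A) (hu : u ≠ []) :
    ¬ Reach φ (phiStar φ u, (1 : WithOne S)) ((1 : WithOne S), phiStar φ u) ∧
    ∃ e, IsTransitionOfPath φ u e := by
  refine ⟨not_reach_end_start hu, ?_⟩
  by_contra! h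
  apply not_reach_end_start (φ := φ) hu
  simpa [phiStar_nil] using reach_onPath_of_forall_not_isTransitionOfPath h [] u rfl

/-- There is no path in `Γ_φ` from `(φ(u), I)` to `(I, φ(u))`; consequently the canonical
path `p_u` contains at least one transition edge. -/
theorem no_return_path_and_transition_edge_exists [Semigroup S]
    (φ : A → S) (hφ : PlusSurj φ) (u : List A) (hu : u ≠ []) :
    ¬ Reach φ (phiStar φ u, (1 : WithOne S)) ((1 : WithOne S), phiStar φ u) ∧
    ∃ e, IsTransitionOfPath φ u e :=
  no_return_path_and_transition_edge_exists_general φ u hu
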